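/- Let N ≥ 11 be an integer and let p > p_c. Let v(x) = β^{1/(p−1)} |x|^{−2/(p−1)} for x ≠ 0. Suppose w : ℝ^N → ℝ is a smooth, positive, radially symmetric and radially decreasing solution of −Δw = w^p on ℝ^N with w(0) = 1, and suppose there exists R₀ > 0 such that w(x) < v(x) whenever |x| ≥ R₀. Then w(x) ≤ v(x) for every x ∈ ℝ^N with x ≠ 0. -/

import Mathlib

open Real Set Filter


noncomputable section

/-- Euclidean space ℝ^N. -/
abbrev Euc (N : ℕ) := EuclideanSpace ℝ (Fin N)

/-- The Laplacian of a real-valued function on ℝ^N. -/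
def lap {N : ℕ} (u : Euc N → ℝ) (x : Euc N) : ℝ :=
  ∑ i : Fin N,
    fderiv ℝ (fun y => fderiv ℝ u y (EuclideanSpace.single i 1)) x
      (EuclideanSpace.single i 1)

/-- The Joseph–Lundgren exponent for `N ≥ 11`. -/
def pJL (N : ℕ) : ℝ :=
  (((N : ℝ) - 2) ^ 2 - 4 * N + 8 * Real.sqrt ((N : ℝ) - 1)) /
    (((N : ℝ) - 2) * ((N : ℝ) - 10))

/-- `β(p, N) = (2/(p-1)) (N - 2 - 2/(p-1))`. -/
def betaC (p : ℝ) (N : ℕ) : ℝ := 2 / (p - 1) * ((N : ℝ) - 2 - 2 / (p - 1))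


lemma alg {N : ℕ} (hN : 11 ≤ N) {p : ℝ} (hp : pJL N < p) :
    1 < p ∧ 2/(p-1) < ((N:ℝ)-2)/2 ∧ 0 < betaC p N ∧
      p * betaC p N ≤ (((N:ℝ)-2)/2)^2 := by
  have hn : (11:ℝ) ≤ (N:ℝ) := by exact_mod_cast hN
  set n : ℝ := (N:ℝ) with hn'
  have ht0 : 0 ≤ Real.sqrt (n-1) := Real.sqrt_nonneg _
  have ht2 : Real.sqrt (n-1)^2 = n - 1 := Real.sq_sqrt (by linarith)
  set t := Real.sqrt (n-1) with htdef
  have hD : 0 < (n-2)*(n-10) := by nlinarith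
  have hp' : (n-2)^2 - 4*n + 8*t < p * ((n-2)*(n-10)) := by
    have := hp
    rw [pJL, div_lt_iff₀ hD] at this
    linarith [this]
  have hp1 : 1 < p := by nlinarith
  have hpm : 0 < p - 1 := by linarith
  have h2 : 2/(p-1) < (n-2)/2 := by
    rw [div_lt_div_iff₀ hpm (by norm_num : (0:ℝ) < 2)]
    nlinarith [mul_pos (sub_pos.mpr hp1) hD]
  have key1 : 0 < (n-2)*(n-10)*p - ((n-2)^2-4*n) - 8*t := by nlinarith
  have key2 : 0 < (n-2)*(n-10)*p - ((n-2)^2-4*n) + 8*t := by nlinarith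
  have key := mul_pos key1 key2
  have hid : ((n-2)^2*(p-1)^2 - 8*p*(p-1)*(n-2) + 16*p) * ((n-2)*(n-10))
      = ((n-2)*(n-10)*p - ((n-2)^2-4*n) - 8*t) * ((n-2)*(n-10)*p - ((n-2)^2-4*n) + 8*t)
        + 64*(t^2 - (n-1)) := by ring
  have hGD : 0 < ((n-2)^2*(p-1)^2 - 8*p*(p-1)*(n-2) + 16*p) * ((n-2)*(n-10)) := by
    rw [hid, ht2]; linarith
  have hG : 0 < (n-2)^2*(p-1)^2 - 8*p*(p-1)*(n-2) + 16*p := by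
    by_contra h
    push_neg at h
    nlinarith
  have hbeta : 0 < betaC p N := by
    rw [betaC]
    have h1 : 0 < 2/(p-1) := by positivity
    have h2' : 2/(p-1) < n - 2 := by
      have : (n-2)/2 ≤ n-2 := by linarith
      linarith
    rw [← hn']
    exact mul_pos h1 (by linarith)
  refine ⟨hp1, h2, hbeta, ?_⟩
  have hrw : p * betaC p N = (2*p*(p-1)*(n-2) - 4*p)/(p-1)^2 := by
    rw [betaC, ← hn']
    field_simp
    ring
  rw [hrw, div_le_iff₀ (by positivity)]
  nlinarith

-- convexity of rpow: y^q - x^q ≤ q y^(q-1) (y-x) for 0 < x ≤ y, 1 ≤ q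
lemma rpow_convex_ineq {x y q : ℝ} (hx : 0 < x) (hxy : x ≤ y) (hq : 1 ≤ q) :
    y ^ q - x ^ q ≤ q * y ^ (q - 1) * (y - x) := by
  rcases eq_or_lt_of_le hxy with h | h
  · subst h; simp
  · have hcont : ContinuousOn (fun t : ℝ => t ^ q) (Icc x y) := by
      intro t ht
      exact (Real.continuousAt_rpow_const t q (Or.inl (by linarith [ht.1]))).continuousWithinAt
    have hder : ∀ t ∈ Ioo x y, HasDerivAt (fun t : ℝ => t ^ q) (q * t ^ (q-1)) t := by
      intro t ht
      exact Real.hasDerivAt_rpow_const (Or.inl (by linarith [ht.1]))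
    obtain ⟨c, hc, hceq⟩ := exists_hasDerivAt_eq_slope (fun t : ℝ => t ^ q)
      (fun t => q * t ^ (q-1)) h hcont hder
    have hcle : c ^ (q-1) ≤ y ^ (q-1) :=
      Real.rpow_le_rpow (by linarith [hc.1]) (le_of_lt hc.2) (by linarith)
    have hslope : (y ^ q - x ^ q) / (y - x) ≤ q * y ^ (q-1) := by
      rw [← hceq]
      have hq0 : 0 ≤ q := by linarith
      nlinarith [hcle]
    have hyx : 0 < y - x := by linarith
    calc y ^ q - x ^ q = (y ^ q - x ^ q) / (y - x) * (y - x) := by field_simp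
    _ ≤ q * y ^ (q-1) * (y - x) := by
        apply mul_le_mul_of_nonneg_right hslope (le_of_lt hyx)

-- if H < 0 on (c, ρ), H ρ ≥ 0, and H has derivative d at ρ, then d ≥ 0
lemma deriv_nonneg_left {H : ℝ → ℝ} {d c ρ : ℝ} (hc : c < ρ)
    (hH : HasDerivAt H d ρ) (hneg : ∀ r ∈ Ioo c ρ, H r < 0) (hρ : 0 ≤ H ρ) :
    0 ≤ d := by
  have ht : Filter.Tendsto (slope H ρ) (nhdsWithin ρ (Iio ρ)) (nhds d) :=
    (hasDerivAt_iff_tendsto_slope.mp hH).mono_left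
      (nhdsWithin_mono ρ (fun y hy => ne_of_lt hy))
  refine ge_of_tendsto ht ?_
  filter_upwards [Ioo_mem_nhdsLT_of_mem (⟨hc, le_refl ρ⟩ : ρ ∈ Ioc c ρ)] with r hr
  have h1 : H r < 0 := hneg r hr
  have h2 : r - ρ < 0 := by linarith [hr.2]
  rw [slope_def_field]
  exact div_nonneg_of_nonpos (by linarith) (by linarith)

lemma lap_radial {N : ℕ} (w : Euc N → ℝ) (f : ℝ → ℝ)
    (hf : ContDiff ℝ (⊤ : ℕ∞) f) (hrep : ∀ y : Euc N, w y = f ‖y‖) :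
    ∀ x : Euc N, x ≠ 0 →
      lap w x = deriv (deriv f) ‖x‖ + ((N:ℝ)-1)/‖x‖ * deriv f ‖x‖ := by
  -- f differentiability facts
  have hfd : Differentiable ℝ f := hf.differentiable (by norm_num)
  have hfd2 : Differentiable ℝ (deriv f) := by
    have h := (contDiff_infty_iff_deriv.mp (hf.of_le (by simp))).2
    exact h.differentiable (by simp)
  -- Q = squared norm
  set Q : Euc N → ℝ := fun y => ∑ i, y i * y i with hQdef
  have hQnorm : ∀ y : Euc N, Q y = ‖y‖^2 := by
    intro y
    rw [EuclideanSpace.norm_eq, Real.sq_sqrt (by positivity)]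
    simp [hQdef, Real.norm_eq_abs, sq_abs, sq]
  have hQpos : ∀ y : Euc N, y ≠ 0 → 0 < Q y := by
    intro y hy
    rw [hQnorm]
    have : 0 < ‖y‖ := norm_pos_iff.mpr hy
    positivity
  have hQ : ∀ y : Euc N, HasFDerivAt Q
      (∑ i, (2 * y i) • EuclideanSpace.proj (𝕜 := ℝ) i) y := by
    intro y
    apply HasFDerivAt.fun_sum
    intro i _
    have hp := (EuclideanSpace.proj (𝕜 := ℝ) (i : Fin N)).hasFDerivAt (x := y)
    have h2 := hp.mul hp
    refine h2.congr_fderiv (Eq.symm ?_)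
    ext z
    simp only [ContinuousLinearMap.smul_apply, ContinuousLinearMap.add_apply]
    show (2 * y i) * z i = _ • _ + _ • _
    simp only [smul_eq_mul]
    show 2 * y i * z i = EuclideanSpace.proj (𝕜 := ℝ) i y * z i
      + EuclideanSpace.proj (𝕜 := ℝ) i y * z i
    show 2 * y i * z i = y i * z i + y i * z i
    ring
  -- the 1-d profiles
  set φ : ℝ → ℝ := fun u => f (Real.sqrt u) with hφdef
  set φ₁ : ℝ → ℝ := fun u => deriv f (Real.sqrt u) / (2 * Real.sqrt u) with hφ₁def
  set φ₂ : ℝ → ℝ := fun u => deriv (deriv f) (Real.sqrt u) / (4*u)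
      - deriv f (Real.sqrt u) / (4 * u * Real.sqrt u) with hφ₂def
  have hsq : ∀ u : ℝ, 0 < u → Real.sqrt u ≠ 0 := fun u hu => by positivity
  have hsqsq : ∀ u : ℝ, 0 < u → Real.sqrt u * Real.sqrt u = u := fun u hu =>
    Real.mul_self_sqrt (le_of_lt hu)
  have hφ : ∀ u : ℝ, 0 < u → HasDerivAt φ (φ₁ u) u := by
    intro u hu
    have hs := Real.hasDerivAt_sqrt (ne_of_gt hu)
    have hc := (hfd (Real.sqrt u)).hasDerivAt.comp u hs
    refine hc.congr_deriv (Eq.symm ?_)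
    rw [hφ₁def]
    field_simp
  have hφ₁ : ∀ u : ℝ, 0 < u → HasDerivAt φ₁ (φ₂ u) u := by
    intro u hu
    have hs := Real.hasDerivAt_sqrt (ne_of_gt hu)
    have hA : HasDerivAt (fun u => deriv f (Real.sqrt u))
        (deriv (deriv f) (Real.sqrt u) * (1 / (2 * Real.sqrt u))) u :=
      (hfd2 (Real.sqrt u)).hasDerivAt.comp u hs
    have hB : HasDerivAt (fun u => 2 * Real.sqrt u) (2 * (1 / (2 * Real.sqrt u))) u :=
      hs.const_mul 2
    have hBne : 2 * Real.sqrt u ≠ 0 := by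
      have := hsq u hu; positivity
    have := hA.div hB hBne
    refine this.congr_deriv (Eq.symm ?_)
    rw [hφ₂def]
    have h1 := hsq u hu
    have h2' : Real.sqrt u ^ 2 = u := Real.sq_sqrt hu.le
    have h3 : Real.sqrt u ^ 3 = u * Real.sqrt u := by
      rw [show (Real.sqrt u)^3 = ((Real.sqrt u)^2)*(Real.sqrt u) by ring, h2']
    have h4 : Real.sqrt u ^ 4 = u ^ 2 := by
      rw [show (Real.sqrt u)^4 = ((Real.sqrt u)^2)^2 by ring, h2']
    field_simp
    ring_nf
    simp only [h2', h3, h4]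
    ring
  -- main computation
  intro x hx
  have hr : 0 < ‖x‖ := norm_pos_iff.mpr hx
  have hmem : ∀ y : Euc N, y ≠ 0 → {z : Euc N | z ≠ 0} ∈ nhds y := by
    intro y hy
    exact IsOpen.mem_nhds isOpen_compl_singleton hy
  have heq : ∀ y : Euc N, y ≠ 0 → w y = φ (Q y) := by
    intro y hy
    rw [hrep y, hφdef]
    simp only
    rw [hQnorm, Real.sqrt_sq (norm_nonneg y)]
  -- first derivative of w away from 0
  have hwd : ∀ y : Euc N, y ≠ 0 → HasFDerivAt w
      (φ₁ (Q y) • (∑ i, (2 * y i) • EuclideanSpace.proj (𝕜 := ℝ) i)) y := by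
    intro y hy
    have h1 := (hφ (Q y) (hQpos y hy)).comp_hasFDerivAt y (hQ y)
    apply h1.congr_of_eventuallyEq
    filter_upwards [hmem y hy] with z hz
    exact heq z hz
  have happ : ∀ (y : Euc N) (i : Fin N),
      (∑ j, (2 * y j) • EuclideanSpace.proj (𝕜 := ℝ) (j : Fin N))
        (EuclideanSpace.single i 1) = 2 * y i := by
    intro y i
    rw [ContinuousLinearMap.sum_apply]
    rw [Finset.sum_eq_single i]
    · show (2 * y i) • (EuclideanSpace.single i (1:ℝ)) i = 2 * y i
      rw [EuclideanSpace.single_apply]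
      simp
    · intro j _ hj
      show (2 * y j) • (EuclideanSpace.single i (1:ℝ)) j = 0
      rw [EuclideanSpace.single_apply]
      simp [hj]
    · intro h; exact absurd (Finset.mem_univ i) h
  -- the inner derivative function coincides with G i near x
  have hgG : ∀ i : Fin N,
      fderiv ℝ (fun y => fderiv ℝ w y (EuclideanSpace.single i 1)) x
        (EuclideanSpace.single i 1)
      = fderiv ℝ (fun y => φ₁ (Q y) * (2 * y i)) x (EuclideanSpace.single i 1) := by
    intro i
    congr 1
    apply Filter.EventuallyEq.fderiv_eq
    filter_upwards [hmem x hx] with z hz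
    rw [(hwd z hz).fderiv]
    rw [ContinuousLinearMap.smul_apply, happ z i]
    simp [smul_eq_mul]
  -- derivative of G i at x
  have hGder : ∀ i : Fin N,
      fderiv ℝ (fun y => φ₁ (Q y) * (2 * y i)) x (EuclideanSpace.single i 1)
      = 2 * φ₁ (Q x) + 4 * φ₂ (Q x) * (x i * x i) := by
    intro i
    have hc : HasFDerivAt (fun y => φ₁ (Q y))
        (φ₂ (Q x) • (∑ j, (2 * x j) • EuclideanSpace.proj (𝕜 := ℝ) j)) x :=
      (hφ₁ (Q x) (hQpos x hx)).comp_hasFDerivAt x (hQ x)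
    have hd : HasFDerivAt (fun y : Euc N => 2 * y i)
        ((2:ℝ) • EuclideanSpace.proj (𝕜 := ℝ) (i : Fin N)) x := by
      have := (EuclideanSpace.proj (𝕜 := ℝ) (i : Fin N)).hasFDerivAt (x := x)
      exact this.const_mul 2
    have hmul := hc.fun_mul hd
    rw [hmul.fderiv]
    have hps : (EuclideanSpace.proj (𝕜 := ℝ) (i : Fin N)) (EuclideanSpace.single i (1:ℝ)) = 1 := by
      show (EuclideanSpace.single i (1:ℝ)) i = 1
      rw [EuclideanSpace.single_apply]
      simp
    simp only [ContinuousLinearMap.add_apply, ContinuousLinearMap.smul_apply, smul_eq_mul]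
    rw [happ x i, hps]
    ring
  -- assemble the laplacian
  have hlap : lap w x = 2 * N * φ₁ (Q x) + 4 * φ₂ (Q x) * Q x := by
    rw [lap]
    have : ∀ i : Fin N,
        fderiv ℝ (fun y => fderiv ℝ w y (EuclideanSpace.single i 1)) x
          (EuclideanSpace.single i 1)
        = 2 * φ₁ (Q x) + 4 * φ₂ (Q x) * (x i * x i) := fun i => (hgG i).trans (hGder i)
    rw [Finset.sum_congr rfl (fun i _ => this i)]
    rw [Finset.sum_add_distrib, Finset.sum_const, ← Finset.mul_sum]
    simp only [Finset.card_univ, Fintype.card_fin, nsmul_eq_mul]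
    rw [hQdef]
    ring
  -- evaluate at r = ‖x‖
  rw [hlap, hQnorm x]
  have hrs : Real.sqrt (‖x‖^2) = ‖x‖ := Real.sqrt_sq (norm_nonneg x)
  rw [hφ₁def, hφ₂def]
  simp only [hrs]
  have hrne : ‖x‖ ≠ 0 := ne_of_gt hr
  field_simp
  ring

set_option maxHeartbeats 1000000 in
/-- For `N ≥ 11`, `p > p_c`: if `w` is a smooth positive radially
symmetric and radially decreasing solution of `-Δw = w^p` on ℝ^N with `w(0) = 1`
which eventually lies below the singular profile `v(x) = β^(1/(p-1)) |x|^(-2/(p-1))`,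
then `w ≤ v` everywhere away from the origin. -/
theorem radial_solution_le_singular (N : ℕ) (hN : 11 ≤ N) (p : ℝ)
    (hp : pJL N < p)
    (v : Euc N → ℝ)
    (hv : ∀ x : Euc N, x ≠ 0 →
      v x = betaC p N ^ (1 / (p - 1)) * ‖x‖ ^ (-2 / (p - 1)))
    (w : Euc N → ℝ) (hw : ContDiff ℝ (⊤ : ℕ∞) w) (hwpos : ∀ x, 0 < w x)
    (hwrad : ∀ x y : Euc N, ‖x‖ ≤ ‖y‖ → w y ≤ w x)
    (hweq : ∀ x : Euc N, -lap w x = w x ^ p) (hw0 : w 0 = 1)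
    (R₀ : ℝ) (hR₀ : 0 < R₀) (hfar : ∀ x : Euc N, R₀ ≤ ‖x‖ → w x < v x) :
    ∀ x : Euc N, x ≠ 0 → w x ≤ v x := by
  obtain ⟨hp1, haθ, hβ, hpβ⟩ := alg hN hp
  have hpm : 0 < p - 1 := by linarith
  -- abbreviations
  set n : ℝ := (N:ℝ) with hndef
  set a : ℝ := 2/(p-1) with hadef
  set θ : ℝ := (n-2)/2 with hθdef
  set β : ℝ := betaC p N with hβdef
  set b : ℝ := β ^ (1/(p-1)) with hbdef
  have ha : 0 < a := by positivity
  have hθpos : 0 < θ := lt_trans ha haθ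
  have hb : 0 < b := Real.rpow_pos_of_pos hβ _
  have haP : a * (p-1) = 2 := by rw [hadef]; field_simp
  have hβid : β = a*(2*θ - a) := by
    rw [hβdef, betaC, hθdef, hadef]
    ring
  -- the radial profile f
  have hNpos : 0 < N := by omega
  set e₀ : Euc N := EuclideanSpace.single (⟨0, hNpos⟩ : Fin N) 1 with he₀def
  have he₀ : ‖e₀‖ = 1 := by
    rw [he₀def, EuclideanSpace.norm_eq]
    rw [Finset.sum_eq_single (⟨0, hNpos⟩ : Fin N)]
    · rw [EuclideanSpace.single_apply]
      simp
    · intro j _ hj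
      rw [EuclideanSpace.single_apply]
      simp [hj]
    · intro h; exact absurd (Finset.mem_univ _) h
  set f : ℝ → ℝ := fun r => w (r • e₀) with hfdef
  have hsm : ContDiff ℝ (⊤ : ℕ∞) (fun r : ℝ => r • e₀) := contDiff_id.smul contDiff_const
  have hf : ContDiff ℝ (⊤ : ℕ∞) f := hw.comp hsm
  have hnorm_smul : ∀ r : ℝ, 0 ≤ r → ‖(r • e₀ : Euc N)‖ = r := by
    intro r hr
    rw [norm_smul, he₀, mul_one, Real.norm_eq_abs, abs_of_nonneg hr]
  have hrep : ∀ y : Euc N, w y = f ‖y‖ := by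
    intro y
    have h1 : ‖((‖y‖) • e₀ : Euc N)‖ = ‖y‖ := hnorm_smul _ (norm_nonneg y)
    exact le_antisymm (hwrad ((‖y‖) • e₀) y (le_of_eq h1)) (hwrad y ((‖y‖) • e₀) (le_of_eq h1.symm))
  have hfd : Differentiable ℝ f := hf.differentiable (by simp)
  have hfd2 : Differentiable ℝ (deriv f) := by
    have h := (contDiff_infty_iff_deriv.mp (hf.of_le (by simp))).2
    exact h.differentiable (by simp)
  have hfpos : ∀ r : ℝ, 0 < f r := fun r => hwpos _
  have hf1 : ∀ r : ℝ, f r ≤ 1 := by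
    intro r
    have := hwrad 0 (r • e₀) (by rw [norm_zero]; exact norm_nonneg _)
    rwa [hw0] at this
  -- the ODE
  have hode : ∀ r : ℝ, 0 < r →
      deriv (deriv f) r + (n-1)/r * deriv f r = -(f r)^p := by
    intro r hr
    have hxne : (r • e₀ : Euc N) ≠ 0 := by
      intro h
      have := hnorm_smul r hr.le
      rw [h, norm_zero] at this
      exact absurd this.symm (ne_of_gt hr)
    have h1 := lap_radial w f hf hrep (r • e₀) hxne
    rw [hnorm_smul r hr.le] at h1
    have h2 := hweq (r • e₀)
    have h3 : w (r • e₀) = f r := by rw [hrep, hnorm_smul r hr.le]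
    rw [h3] at h2
    rw [← hndef] at h1
    linarith [h1, h2, h1 ▸ h2]
  -- singular profile V
  set V : ℝ → ℝ := fun r => b * r ^ (-a) with hVdef
  have hVpos : ∀ r : ℝ, 0 < r → 0 < V r := by
    intro r hr
    exact mul_pos hb (Real.rpow_pos_of_pos hr _)
  have hVval : ∀ x : Euc N, x ≠ 0 → v x = V ‖x‖ := by
    intro x hx
    rw [hv x hx, hVdef]
    simp only
    congr 1
    rw [hadef]
    ring
  have hVanti : ∀ s t : ℝ, 0 < s → s < t → V t < V s := by
    intro s t hs hst
    rw [hVdef]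
    simp only
    have h1 : s ^ a < t ^ a := Real.rpow_lt_rpow hs.le hst ha
    have h2 : (0:ℝ) < s ^ a := Real.rpow_pos_of_pos hs _
    rw [Real.rpow_neg (le_of_lt hs), Real.rpow_neg (by linarith)]
    have := one_div_lt_one_div_of_lt h2 h1
    rw [one_div, one_div] at this
    exact mul_lt_mul_of_pos_left this hb
  -- suppose not
  by_contra hcon
  push_neg at hcon
  obtain ⟨xb, hxb0, hxb⟩ := hcon
  have hrb : 0 < ‖xb‖ := norm_pos_iff.mpr hxb0
  set rb : ℝ := ‖xb‖ with hrbdef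
  have hfb : V rb < f rb := by
    rw [← hrep xb, ← hVval xb hxb0]; exact hxb
  -- r⋆ where V = 1
  set rs : ℝ := b ^ (1/a) with hrsdef
  have hrs : 0 < rs := Real.rpow_pos_of_pos hb _
  have hVrs : V rs = 1 := by
    rw [hVdef, hrsdef]
    simp only
    rw [← Real.rpow_mul hb.le]
    rw [show (1/a)*(-a) = (-1:ℝ) by field_simp]
    rw [Real.rpow_neg_one]
    exact mul_inv_cancel₀ hb.ne'
  -- the infimum of the contact set
  set A : Set ℝ := {r | r ∈ Icc rs rb ∧ V r ≤ f r} with hAdef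
  have hrsrb : rs ≤ rb := by
    by_contra hlt
    push_neg at hlt
    have := hVanti rb rs hrb hlt
    rw [hVrs] at this
    linarith [hf1 rb, hfb]
  have hAne : rb ∈ A := ⟨⟨hrsrb, le_refl _⟩, hfb.le⟩
  have hAbdd : BddBelow A := ⟨rs, fun r hr => hr.1.1⟩
  set ρ : ℝ := sInf A with hρdef
  have hρlb : ∀ r ∈ A, ρ ≤ r := fun r hr => csInf_le hAbdd hr
  have hρgers : rs ≤ ρ := le_csInf ⟨rb, hAne⟩ (fun r hr => hr.1.1)
  have hρpos : 0 < ρ := lt_of_lt_of_le hrs hρgers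
  have hρlerb : ρ ≤ rb := hρlb rb hAne
  have hVcont : ∀ r : ℝ, 0 < r → ContinuousAt V r := by
    intro r hr
    rw [hVdef]
    exact continuousAt_const.mul (Real.continuousAt_rpow_const r (-a) (Or.inl (ne_of_gt hr)))
  have hmemρ : V ρ ≤ f ρ := by
    by_contra hlt
    push_neg at hlt
    have hc : ContinuousAt (fun r => V r - f r) ρ :=
      (hVcont ρ hρpos).sub hfd.continuous.continuousAt
    have h0' : (0:ℝ) < V ρ - f ρ := by linarith
    have hev : ∀ᶠ r in nhds ρ, 0 < V r - f r :=
      hc.eventually (eventually_gt_nhds h0')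
    rw [Metric.eventually_nhds_iff] at hev
    obtain ⟨δ, hδ, hball⟩ := hev
    have hlb : ∀ x ∈ A, ρ + δ/2 ≤ x := by
      intro x hxA
      by_contra hxlt
      push_neg at hxlt
      have hxge : ρ ≤ x := hρlb x hxA
      have hdist : dist x ρ < δ := by
        rw [Real.dist_eq, abs_of_nonneg (by linarith)]
        linarith
      have := hball hdist
      linarith [hxA.2]
    have : ρ + δ/2 ≤ ρ := le_csInf ⟨rb, hAne⟩ hlb
    linarith
  have hstrict : ∀ r : ℝ, 0 < r → r < ρ → f r < V r := by
    intro r h0 hrρ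
    by_cases hrs' : rs ≤ r
    · by_contra hge
      push_neg at hge
      have : r ∈ A := ⟨⟨hrs', by linarith⟩, hge⟩
      linarith [hρlb r this]
    · push_neg at hrs'
      have := hVanti r rs h0 hrs'
      rw [hVrs] at this
      linarith [hf1 r]
  -- the Wronskian-type function W
  set W : ℝ → ℝ := fun r => r^(θ+1) * deriv f r + θ * r^θ * f r + b*(a-θ)*r^(θ-a) with hWdef
  have hWd : ∀ r : ℝ, 0 < r → HasDerivAt W
      (θ^2 * r^(θ-1) * f r - r^(θ+1) * (f r)^p - b*(a-θ)^2 * r^(θ-a-1)) r := by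
    intro r hr
    have hne : r ≠ 0 := ne_of_gt hr
    have h1 : HasDerivAt (fun s : ℝ => s^(θ+1)) ((θ+1) * r^(θ+1-1)) r :=
      Real.hasDerivAt_rpow_const (Or.inl hne)
    have h2 : HasDerivAt (fun s : ℝ => s^θ) (θ * r^(θ-1)) r :=
      Real.hasDerivAt_rpow_const (Or.inl hne)
    have h3 : HasDerivAt (fun s : ℝ => s^(θ-a)) ((θ-a) * r^(θ-a-1)) r :=
      Real.hasDerivAt_rpow_const (Or.inl hne)
    have hdf : HasDerivAt (deriv f) (deriv (deriv f) r) r := (hfd2 r).hasDerivAt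
    have hff : HasDerivAt f (deriv f r) r := (hfd r).hasDerivAt
    have hT1 := h1.mul hdf
    have hT2 := (HasDerivAt.const_mul θ h2).mul hff
    have hT3 := HasDerivAt.const_mul (b*(a-θ)) h3
    have hsum := (hT1.add hT2).add hT3
    refine hsum.congr_deriv (Eq.symm ?_)
    simp only [show θ+1-1 = θ from by ring]
    have hfpp : deriv (deriv f) r = -(f r)^p - (n-1)/r * deriv f r := by
      linarith [hode r hr]
    rw [hfpp]
    have hsplit : r^(θ+1) = r^θ * r := Real.rpow_add_one hne θ
    rw [hsplit]
    have hn2θ : n - 1 = 2*θ+1 := by rw [hθdef]; ring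
    rw [hn2θ]
    field_simp
    ring
  -- rpow facts for V
  have hbpow : b^(p-1) = β := by
    rw [hbdef, ← Real.rpow_mul hβ.le]
    rw [show 1/(p-1)*(p-1) = (1:ℝ) by field_simp, Real.rpow_one]
  have hVp1 : ∀ r : ℝ, 0 < r → (V r)^(p-1) = β * r^(-2 : ℝ) := by
    intro r hr
    rw [hVdef]
    simp only
    rw [Real.mul_rpow hb.le (Real.rpow_nonneg hr.le _)]
    rw [← Real.rpow_mul hr.le]
    rw [hbpow, show -a*(p-1) = (-2:ℝ) by linear_combination -haP]
  have hVp : ∀ r : ℝ, 0 < r → (V r)^p = β * b * r^(-a-2) := by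
    intro r hr
    have h0 : (V r)^p = (V r)^(p-1) * V r := by
      nth_rewrite 1 [show p = (p-1)+1 by ring]
      rw [Real.rpow_add (hVpos r hr), Real.rpow_one]
    rw [h0, hVp1 r hr, hVdef]
    simp only
    calc β * r^(-2:ℝ) * (b * r^(-a)) = β * b * (r^(-2:ℝ) * r^(-a)) := by ring
    _ = β * b * r^(-a-2) := by
        rw [← Real.rpow_add hr]
        congr 1
        ring
  -- W' ≤ 0 on (0, ρ)
  have hW'le : ∀ r : ℝ, 0 < r → r < ρ →
      θ^2 * r^(θ-1) * f r - r^(θ+1) * (f r)^p - b*(a-θ)^2 * r^(θ-a-1) ≤ 0 := by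
    intro r hr hrρ
    have hfV : f r < V r := hstrict r hr hrρ
    have hcx := rpow_convex_ineq (hfpos r) hfV.le hp1.le
    rw [hVp1 r hr] at hcx
    have e1 : r^(θ-1) * r^(-a) = r^(θ-a-1) := by
      rw [← Real.rpow_add hr]; congr 1 <;> ring
    have e2 : r^(θ+1) * r^(-a-2) = r^(θ-a-1) := by
      rw [← Real.rpow_add hr]; congr 1 <;> ring
    have hkey : b*(a-θ)^2 * r^(θ-a-1) = θ^2 * r^(θ-1) * V r - r^(θ+1) * (V r)^p := by
      rw [hVp r hr]
      nth_rewrite 1 [hVdef]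
      simp only
      calc b*(a-θ)^2*r^(θ-a-1) = (θ^2*b - (a*(2*θ-a))*b) * r^(θ-a-1) := by ring
      _ = θ^2*b*(r^(θ-1)*r^(-a)) - β*b*(r^(θ+1)*r^(-a-2)) := by
          rw [e1, e2, hβid]; ring
      _ = _ := by ring
    have h1 : r^(θ+1) * ((V r)^p - (f r)^p) ≤ r^(θ+1) * (p * (β * r^(-2:ℝ)) * (V r - f r)) :=
      mul_le_mul_of_nonneg_left hcx (Real.rpow_nonneg hr.le _)
    have e3 : r^(θ+1) * r^(-2:ℝ) = r^(θ-1) := by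
      rw [← Real.rpow_add hr]; congr 1 <;> ring
    have h2 : r^(θ+1) * (p * (β * r^(-2:ℝ)) * (V r - f r)) = p*β*(r^(θ-1)) * (V r - f r) := by
      calc r^(θ+1) * (p * (β * r^(-2:ℝ)) * (V r - f r))
          = p*β*(r^(θ+1) * r^(-2:ℝ))*(V r - f r) := by ring
      _ = _ := by rw [e3]
    have h3 : p*β*(r^(θ-1))*(V r - f r) ≤ θ^2*(r^(θ-1))*(V r - f r) := by
      apply mul_le_mul_of_nonneg_right _ (by linarith)
      exact mul_le_mul_of_nonneg_right hpβ (Real.rpow_nonneg hr.le _)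
    have hchain : r^(θ+1) * ((V r)^p - (f r)^p) ≤ θ^2*(r^(θ-1))*(V r - f r) := by
      rw [h2] at h1
      linarith
    have hexp1 : r^(θ+1) * ((V r)^p - (f r)^p)
        = r^(θ+1)*(V r)^p - r^(θ+1)*(f r)^p := by ring
    have hexp2 : θ^2*(r^(θ-1))*(V r - f r)
        = θ^2 * r^(θ-1) * V r - θ^2 * r^(θ-1) * f r := by ring
    rw [hkey]
    linarith [hchain, hexp1, hexp2]
  -- derivative of f - V is nonnegative at ρ
  have hVd : HasDerivAt V (b * (-a * ρ^(-a-1))) ρ := by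
    rw [hVdef]
    exact HasDerivAt.const_mul b
      (Real.hasDerivAt_rpow_const (p := -a) (Or.inl (ne_of_gt hρpos)))
  have hHd : HasDerivAt (fun r => f r - V r) (deriv f ρ - b * (-a * ρ^(-a-1))) ρ :=
    ((hfd ρ).hasDerivAt).sub hVd
  have hH'ρ : 0 ≤ deriv f ρ - b * (-a * ρ^(-a-1)) := by
    apply deriv_nonneg_left (show (0:ℝ) < ρ from hρpos) hHd
    · intro r hr
      have := hstrict r hr.1 hr.2
      linarith
    · linarith [hmemρ]
  have hWρ : 0 ≤ W ρ := by
    rw [hWdef]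
    simp only
    have e4 : ρ^(θ+1) * ρ^(-a-1) = ρ^(θ-a) := by
      rw [← Real.rpow_add hρpos]; congr 1 <;> ring
    have e5 : ρ^θ * ρ^(-a) = ρ^(θ-a) := by
      rw [← Real.rpow_add hρpos]; congr 1 <;> ring
    have hWρeq : ρ^(θ+1) * deriv f ρ + θ*ρ^θ*f ρ + b*(a-θ)*ρ^(θ-a)
        = ρ^(θ+1) * (deriv f ρ - b*(-a*ρ^(-a-1))) + θ*ρ^θ*(f ρ - V ρ) := by
      simp only [hVdef]
      calc ρ^(θ+1) * deriv f ρ + θ*ρ^θ*f ρ + b*(a-θ)*ρ^(θ-a)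
          = ρ^(θ+1) * deriv f ρ + θ*ρ^θ*f ρ + a*b*ρ^(θ-a) - θ*b*ρ^(θ-a) := by ring
      _ = ρ^(θ+1) * deriv f ρ + θ*ρ^θ*f ρ + a*b*(ρ^(θ+1)*ρ^(-a-1)) - θ*b*(ρ^θ*ρ^(-a)) := by
          rw [e4, e5]
      _ = _ := by ring
    rw [hWρeq]
    apply add_nonneg
    · exact mul_nonneg (Real.rpow_nonneg hρpos.le _) hH'ρ
    · apply mul_nonneg (mul_nonneg hθpos.le (Real.rpow_nonneg hρpos.le _))
      linarith [hmemρ]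
  -- W is antitone on [r₀, ρ]
  have hanti : ∀ r₀ : ℝ, 0 < r₀ → r₀ < ρ → W ρ ≤ W r₀ := by
    intro r₀ h0 hlt
    have hconv : Convex ℝ (Icc r₀ ρ) := convex_Icc _ _
    have hcont : ContinuousOn W (Icc r₀ ρ) := by
      intro r hrI
      exact ((hWd r (lt_of_lt_of_le h0 hrI.1)).continuousAt).continuousWithinAt
    have hdiff : DifferentiableOn ℝ W (interior (Icc r₀ ρ)) := by
      intro r hrI
      rw [interior_Icc] at hrI
      exact ((hWd r (lt_trans h0 hrI.1)).differentiableAt).differentiableWithinAt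
    have hder : ∀ r ∈ interior (Icc r₀ ρ), deriv W r ≤ 0 := by
      intro r hrI
      rw [interior_Icc] at hrI
      have hr : 0 < r := lt_trans h0 hrI.1
      rw [(hWd r hr).deriv]
      exact hW'le r hr hrI.2
    exact antitoneOn_of_deriv_nonpos hconv hcont hdiff hder
      (left_mem_Icc.mpr hlt.le) (right_mem_Icc.mpr hlt.le) hlt.le
  -- small r: W is negative
  set g : ℝ → ℝ := fun r => r^(1+a) * deriv f r + θ * r^a * f r + b*(a-θ) with hgdef
  have hWg : ∀ r : ℝ, 0 < r → W r = r^(θ-a) * g r := by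
    intro r hr
    rw [hWdef, hgdef]
    simp only
    have e6 : r^(θ-a) * r^(1+a) = r^(θ+1) := by
      rw [← Real.rpow_add hr]; congr 1 <;> ring
    have e7 : r^(θ-a) * r^a = r^θ := by
      rw [← Real.rpow_add hr]; congr 1 <;> ring
    calc r^(θ+1)*deriv f r + θ*r^θ*f r + b*(a-θ)*r^(θ-a)
        = (r^(θ-a)*r^(1+a))*deriv f r + θ*(r^(θ-a)*r^a)*f r + b*(a-θ)*r^(θ-a) := by
          rw [e6, e7]
    _ = r^(θ-a) * (r^(1+a)*deriv f r + θ*r^a*f r + b*(a-θ)) := by ring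
  have hgcont : ContinuousAt g 0 := by
    rw [hgdef]
    apply ContinuousAt.add
    apply ContinuousAt.add
    · exact (Real.continuousAt_rpow_const 0 (1+a) (Or.inr (by linarith))).mul
        hfd2.continuous.continuousAt
    · exact (continuousAt_const.mul
        (Real.continuousAt_rpow_const 0 a (Or.inr ha.le))).mul hfd.continuous.continuousAt
    · exact continuousAt_const
  have hg0 : g 0 = b*(a-θ) := by
    rw [hgdef]
    simp only
    rw [Real.zero_rpow (by positivity : (1:ℝ)+a ≠ 0), Real.zero_rpow (ne_of_gt ha)]
    ring
  have hgneg : ∀ᶠ r in nhds (0:ℝ), g r < 0 := by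
    have hlt0 : g 0 < 0 := by
      rw [hg0]
      exact mul_neg_of_pos_of_neg hb (by linarith)
    exact hgcont.eventually (eventually_lt_nhds hlt0)
  rw [Metric.eventually_nhds_iff] at hgneg
  obtain ⟨δ, hδ, hball⟩ := hgneg
  set r₀ : ℝ := min (δ/2) (ρ/2) with hr₀def
  have hr₀pos : 0 < r₀ := lt_min (by linarith) (by linarith)
  have hr₀ρ : r₀ < ρ := lt_of_le_of_lt (min_le_right _ _) (by linarith)
  have hgr₀ : g r₀ < 0 := by
    apply hball
    rw [Real.dist_eq, sub_zero, abs_of_pos hr₀pos]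
    exact lt_of_le_of_lt (min_le_left _ _) (by linarith)
  have hWr₀ : W r₀ < 0 := by
    rw [hWg r₀ hr₀pos]
    exact mul_neg_of_pos_of_neg (Real.rpow_pos_of_pos hr₀pos _) hgr₀
  linarith [hanti r₀ hr₀pos hr₀ρ, hWρ, hWr₀]
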